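/- For every natural number n and every t ∈ [1/2, 1], the real number E(t) := ((2^{n+1} − 1)·t + (1 − 2ⁿ)) / ((2^{n+1} − 2)·t + (2 − 2ⁿ)) lies in [1/2, 1] and satisfies g₁^[n](E(t)) = t. (Equivalently, g₁^{−n}(t) = E(t) on [1/2, 1].) -/

import Mathlib

/-- The element `g₁` of the Lodha–Moore group as a piecewise fractional linear map. -/
noncomputable def g₁ (t : ℝ) : ℝ :=
  if t ≤ 0 then t
  else if t ≤ 1 / 2 then 2 * t / (2 * t + 1)
  else if t ≤ 1 then 1 / (3 - 2 * t)
  else t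

/-!
On `[1/2, 1]` the map `g₁` is the Möbius map `x ↦ 1 / (3 - 2x)` fixing both endpoints. Writing a
point as `(a + b) / (a + 2b)` with `a, b ≥ 0` (homogeneous coordinates in which `1/2` and `1` are
`a = 0` and `b = 0`), `g₁` becomes `(a, b) ↦ (a, 2b)`, so `g₁^[n]` multiplies `b` by `2ⁿ`. The point
`E(t)` has coordinates `(2ⁿ(2t - 1), 1 - t)`, which `g₁^[n]` sends to `2ⁿ • (2t - 1, 1 - t)`, i.e. to `t`.
-/

open Set

noncomputable def halfOnePoint (a b : ℝ) : ℝ := (a + b) / (a + 2 * b)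

lemma halfOnePoint_mem_Icc {a b : ℝ} (ha : 0 ≤ a) (hb : 0 ≤ b) (hab : 0 < a + 2 * b) :
    halfOnePoint a b ∈ Icc (1 / 2 : ℝ) 1 := by
  unfold halfOnePoint
  constructor
  · rw [le_div_iff₀ hab]; linarith
  · rw [div_le_one hab]; linarith

lemma halfOnePoint_mul (a b : ℝ) {c : ℝ} (hc : c ≠ 0) :
    halfOnePoint (c * a) (c * b) = halfOnePoint a b := by
  unfold halfOnePoint
  rw [← mul_div_mul_left (a + b) (a + 2 * b) hc]
  ring_nf

lemma g₁_of_mem_Icc {x : ℝ} (hx : x ∈ Icc (1 / 2 : ℝ) 1) : g₁ x = 1 / (3 - 2 * x) := by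
  obtain ⟨hx₁, hx₂⟩ := hx
  rcases hx₁.eq_or_lt with rfl | hx₁
  · norm_num [g₁]
  · simp only [g₁, if_neg (by linarith : ¬x ≤ 0), if_neg hx₁.not_ge, if_pos hx₂]

lemma g₁_halfOnePoint {a b : ℝ} (ha : 0 ≤ a) (hb : 0 ≤ b) (hab : 0 < a + 2 * b) :
    g₁ (halfOnePoint a b) = halfOnePoint a (2 * b) := by
  rw [g₁_of_mem_Icc (halfOnePoint_mem_Icc ha hb hab)]
  unfold halfOnePoint
  have hab' : a + 2 * (2 * b) ≠ 0 := by linarith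
  field_simp
  ring

lemma g₁_iterate_halfOnePoint (n : ℕ) {a b : ℝ} (ha : 0 ≤ a) (hb : 0 ≤ b) (hab : 0 < a + 2 * b) :
    g₁^[n] (halfOnePoint a b) = halfOnePoint a (2 ^ n * b) := by
  induction n with
  | zero => simp
  | succ n ih =>
    have h2n : (1 : ℝ) ≤ 2 ^ n := one_le_pow₀ one_le_two
    rw [Function.iterate_succ_apply', ih,
      g₁_halfOnePoint ha (by positivity) (by nlinarith), pow_succ, mul_comm _ (2 : ℝ), mul_assoc]

/-- Formula for the `n`-th iterate of `g₁⁻¹` on `[1/2, 1]`: the point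
`E(t) = ((2^(n+1) − 1)·t + (1 − 2^n)) / ((2^(n+1) − 2)·t + (2 − 2^n))`
lies in `[1/2, 1]` and is mapped to `t` by `g₁^[n]`. -/
theorem g₁_inv_iterate_formula (n : ℕ) (t : ℝ) (ht : t ∈ Set.Icc (1 / 2 : ℝ) 1) :
    ((2 ^ (n + 1) - 1) * t + (1 - 2 ^ n)) / ((2 ^ (n + 1) - 2) * t + (2 - 2 ^ n))
        ∈ Set.Icc (1 / 2 : ℝ) 1 ∧
    g₁^[n] (((2 ^ (n + 1) - 1) * t + (1 - 2 ^ n))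
        / ((2 ^ (n + 1) - 2) * t + (2 - 2 ^ n))) = t := by
  obtain ⟨ht₁, ht₂⟩ := ht
  have h2n : (1 : ℝ) ≤ 2 ^ n := one_le_pow₀ one_le_two
  have hE : ((2 ^ (n + 1) - 1) * t + (1 - 2 ^ n)) / ((2 ^ (n + 1) - 2) * t + (2 - 2 ^ n))
      = halfOnePoint (2 ^ n * (2 * t - 1)) (1 - t) := by
    rw [halfOnePoint, pow_succ]; ring_nf
  have ha : 0 ≤ 2 ^ n * (2 * t - 1) := by nlinarith
  have hb : 0 ≤ 1 - t := by linarith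
  have hab : 0 < 2 ^ n * (2 * t - 1) + 2 * (1 - t) := by nlinarith
  refine ⟨hE ▸ halfOnePoint_mem_Icc ha hb hab, ?_⟩
  rw [hE, g₁_iterate_halfOnePoint n ha hb hab, halfOnePoint_mul _ _ (by positivity), halfOnePoint]
  ring
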